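/- arXiv:1512.08363 — 2 statements merged into one kernel-verified Lean document; each statement's English description precedes it below -/
import Mathlib

section
/- Fix a partition 𝔓 of m × m and (i,j) ∈ P ∈ 𝔓. If {s_0, s_1, ...} ⊆ m^{<ω} is an (i,j)-sequence over x ∈ m^ω, then the functions f_{s_k} converge pointwise on X_𝔓 to the function f_{(x,P)}. -/
open Filter Topology

/-- `s` is an initial segment of the branch `x ∈ m^ω`. -/
def PrefixF {m : ℕ} (s : List (Fin m)) (x : ℕ → Fin m) : Prop :=
  ∀ k, (h : k < s.length) → s.get ⟨k, h⟩ = x k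

/-- `IncFB y s (i, j)` is the incidence `inc(y, s) = (i, j)` of a branch `y` with a node
`s`: either `s⌢i ≤ y` (and `j = i`), or the meet `r = y ∧ s` is proper in both, with
`r⌢i ≤ y` and `r⌢j ≤ s`. -/
def IncFB {m : ℕ} (y : ℕ → Fin m) (s : List (Fin m)) (p : Fin m × Fin m) : Prop :=
  (p.2 = p.1 ∧ PrefixF (s ++ [p.1]) y) ∨
  (p.1 ≠ p.2 ∧ ∃ r : List (Fin m), PrefixF (r ++ [p.1]) y ∧ (r ++ [p.2]) <+: s)

/-- `IncBB y x p` is the incidence `inc(y, x) = p` of two distinct branches: at the first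
coordinate `k` where they diverge, `p = (y k, x k)`. -/
def IncBB {m : ℕ} (y x : ℕ → Fin m) (p : Fin m × Fin m) : Prop :=
  ∃ k : ℕ, (∀ l < k, y l = x l) ∧ y k ≠ x k ∧ p = (y k, x k)

/-- The underlying Polish set `X_𝔓 = m^{<ω} ∪ (m^ω × 𝔓)`. -/
def XP (m : ℕ) (PP : Set (Set (Fin m × Fin m))) : Type :=
  List (Fin m) ⊕ ((ℕ → Fin m) × ↥PP)

open Classical in
/-- The function `f_s : X_𝔓 → {0,1}`: `f_s(t) = 1` iff `t ≤ s`, and `f_s(y,Q) = 1` iff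
`inc(y,s) ∈ Q`. -/
noncomputable def ffun (m : ℕ) (PP : Set (Set (Fin m × Fin m))) (s : List (Fin m)) :
    XP m PP → Bool := fun z =>
  match z with
  | .inl t => decide (t <+: s)
  | .inr yQ => if ∃ p ∈ (yQ.2 : Set (Fin m × Fin m)), IncFB yQ.1 s p then true else false

open Classical in
/-- The function `f_{(x,P)} : X_𝔓 → {0,1}`: `f_{(x,P)}(t) = 1` iff `t ≤ x`, and
`f_{(x,P)}(y,Q) = 1` iff (`y = x` and `Q = P`) or (`y ≠ x` and `inc(y,x) ∈ Q`). -/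
noncomputable def fbr (m : ℕ) (PP : Set (Set (Fin m × Fin m))) (x : ℕ → Fin m) (P : ↥PP) :
    XP m PP → Bool := fun z =>
  match z with
  | .inl t => if PrefixF t x then true else false
  | .inr yQ =>
      if (yQ.1 = x ∧ yQ.2 = P) ∨
         (yQ.1 ≠ x ∧ ∃ p ∈ (yQ.2 : Set (Fin m × Fin m)), IncBB yQ.1 x p)
      then true else false

/-- `K_1(𝔓)`: the pointwise closure of `{f_s : s ∈ m^{<ω}}` in `{0,1}^{X_𝔓}`. -/
def K1 (m : ℕ) (PP : Set (Set (Fin m × Fin m))) : Set (XP m PP → Bool) :=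
  closure (Set.range (ffun m PP))

/-- The meet `s ∧ x` has length at least `N`. -/
def MeetLarge {m : ℕ} (x : ℕ → Fin m) (s : List (Fin m)) (N : ℕ) : Prop :=
  ∃ r : List (Fin m), N ≤ r.length ∧ PrefixF r x ∧ r <+: s


section Aux

variable {m : ℕ}

lemma prefixF_mono {x : ℕ → Fin m} {a b : List (Fin m)} (hab : a <+: b)
    (hb : PrefixF b x) : PrefixF a x := by
  intro k hk
  have hk' : k < b.length := lt_of_lt_of_le hk hab.length_le
  have h1 := hab.getElem hk
  have h2 := hb k hk'
  simp only [List.get_eq_getElem] at h2 ⊢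
  rw [h1]; exact h2

lemma prefixF_prefix {x : ℕ → Fin m} {a b : List (Fin m)} (ha : PrefixF a x)
    (hb : PrefixF b x) (h : a.length ≤ b.length) : a <+: b := by
  rw [List.prefix_iff_eq_take]
  apply List.ext_getElem
  · simp [Nat.min_eq_left h]
  · intro k h1 h2
    have hkb : k < b.length := lt_of_lt_of_le h1 h
    have e1 := ha k h1
    have e2 := hb k hkb
    simp only [List.get_eq_getElem] at e1 e2
    simp [List.getElem_take, e1, e2]

lemma prefixF_concat {x : ℕ → Fin m} {r : List (Fin m)} {c : Fin m}
    (h : PrefixF (r ++ [c]) x) : c = x r.length := by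
  have hk : r.length < (r ++ [c]).length := by simp
  have := h r.length hk
  simpa using this

lemma prefixF_concat_intro {x : ℕ → Fin m} {r : List (Fin m)} {c : Fin m}
    (h : PrefixF r x) (hc : c = x r.length) : PrefixF (r ++ [c]) x := by
  intro k hk
  simp only [List.length_append, List.length_singleton] at hk
  rcases lt_or_ge k r.length with h1 | h1
  · have := h k h1
    simp only [List.get_eq_getElem] at this ⊢
    rwa [List.getElem_append_left h1]
  · have hk' : k = r.length := by omega
    subst hk'
    simp only [List.get_eq_getElem]
    simpa using hc

lemma prefixF_ofFn {n : ℕ} {x y : ℕ → Fin m} (h : ∀ l < n, x l = y l) :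
    PrefixF (List.ofFn (fun i : Fin n => x i)) y := by
  intro k hk
  have hk' : k < n := by simpa using hk
  simp [List.get_ofFn, h k hk']

lemma concat_prefix_eq {r : List (Fin m)} {a b : Fin m} {s : List (Fin m)}
    (h1 : (r ++ [a]) <+: s) (h2 : (r ++ [b]) <+: s) : a = b := by
  have := List.prefix_of_prefix_length_le h1 h2 (by simp)
  have heq := this.eq_of_length (by simp)
  have := List.append_cancel_left heq
  simpa using this

lemma incFB_unique {y : ℕ → Fin m} {s : List (Fin m)} {p q : Fin m × Fin m}
    (hp : IncFB y s p) (hq : IncFB y s q) : p = q := by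
  have key : ∀ p q : Fin m × Fin m, (p.2 = p.1 ∧ PrefixF (s ++ [p.1]) y) →
      (q.1 ≠ q.2 ∧ ∃ r, PrefixF (r ++ [q.1]) y ∧ (r ++ [q.2]) <+: s) → False := by
    rintro p q ⟨-, hpy⟩ ⟨hne, r, hry, hrs⟩
    have hsy : PrefixF s y := prefixF_mono (List.prefix_append s [p.1]) hpy
    have h2 : PrefixF (r ++ [q.2]) y := prefixF_mono hrs hsy
    exact hne ((prefixF_concat hry).trans (prefixF_concat h2).symm)
  have keyBB : ∀ p q : Fin m × Fin m, ∀ r1 r2 : List (Fin m),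
      p.1 ≠ p.2 → PrefixF (r1 ++ [p.1]) y → (r1 ++ [p.2]) <+: s →
      PrefixF (r2 ++ [q.1]) y → (r2 ++ [q.2]) <+: s →
      r1.length < r2.length → False := by
    rintro p q r1 r2 hne h1y h1s h2y h2s hlt
    have hr2y : PrefixF r2 y := prefixF_mono (List.prefix_append r2 [q.1]) h2y
    have hpre : (r1 ++ [p.1]) <+: r2 := prefixF_prefix h1y hr2y (by simp; omega)
    have h1s' : (r1 ++ [p.1]) <+: s :=
      (hpre.trans (List.prefix_append r2 [q.2])).trans h2s
    exact hne (concat_prefix_eq h1s' h1s)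
  rcases hp with ⟨hp1, hp2⟩ | ⟨hp1, r1, hr1y, hr1s⟩ <;>
    rcases hq with ⟨hq1, hq2⟩ | ⟨hq1, r2, hr2y, hr2s⟩
  · have h1 : p.1 = q.1 := (prefixF_concat hp2).trans (prefixF_concat hq2).symm
    have : p.2 = q.2 := by rw [hp1, hq1, h1]
    exact Prod.ext h1 this
  · exact absurd (key p q ⟨hp1, hp2⟩ ⟨hq1, r2, hr2y, hr2s⟩) (not_false)
  · exact absurd (key q p ⟨hq1, hq2⟩ ⟨hp1, r1, hr1y, hr1s⟩) (not_false)
  · rcases Nat.lt_trichotomy r1.length r2.length with hlt | heq | hgt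
    · exact absurd (keyBB p q r1 r2 hp1 hr1y hr1s hr2y hr2s hlt) not_false
    · have hr1y' : PrefixF r1 y := prefixF_mono (List.prefix_append r1 [p.1]) hr1y
      have hr2y' : PrefixF r2 y := prefixF_mono (List.prefix_append r2 [q.1]) hr2y
      have hr12 : r1 = r2 := (prefixF_prefix hr1y' hr2y' heq.le).eq_of_length heq
      subst hr12
      have h1 : p.1 = q.1 := (prefixF_concat hr1y).trans (prefixF_concat hr2y).symm
      have h2 : p.2 = q.2 := concat_prefix_eq hr1s hr2s
      exact Prod.ext h1 h2
    · exact absurd (keyBB q p r2 r1 hq1 hr2y hr2s hr1y hr1s hgt) not_false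

lemma incBB_unique {y x : ℕ → Fin m} {p q : Fin m × Fin m}
    (hp : IncBB y x p) (hq : IncBB y x q) : p = q := by
  obtain ⟨k1, h1, h2, rfl⟩ := hp
  obtain ⟨k2, g1, g2, rfl⟩ := hq
  have : k1 = k2 := by
    by_contra h
    rcases Nat.lt_or_ge k1 k2 with hlt | hge
    · exact h2 (g1 k1 hlt)
    · exact g2 (h1 k2 (by omega))
  subst this; rfl

end Aux

/-- Convergence in `K_1(𝔓)` for a partition `𝔓` of `m × m`: if `(i,j) ∈ P ∈ 𝔓` and
`(s_k)` is an `(i,j)`-sequence over `x ∈ m^ω`, then `f_{s_k}` converges pointwise on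
`X_𝔓` to `f_{(x,P)}`. -/
theorem K1_convergence (m : ℕ) (PP : Set (Set (Fin m × Fin m)))
    (hpart : Setoid.IsPartition PP)
    (i j : Fin m) (P : Set (Fin m × Fin m)) (hP : P ∈ PP) (hij : (i, j) ∈ P)
    (x : ℕ → Fin m) (s : ℕ → List (Fin m))
    (hinc : ∀ k, IncFB x (s k) (i, j))
    (hmeet : ∀ N : ℕ, ∀ᶠ k in Filter.atTop, MeetLarge x (s k) N) :
    Filter.Tendsto (fun k => ffun m PP (s k)) Filter.atTop (𝓝 (fbr m PP x ⟨P, hP⟩)) := by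
  classical
  rw [tendsto_pi_nhds]
  intro z
  rcases z with t | ⟨y, Q⟩
  · rw [nhds_discrete, Filter.tendsto_pure]
    by_cases hpre : PrefixF t x
    · filter_upwards [hmeet t.length] with k hk
      obtain ⟨r, hrlen, hrx, hrs⟩ := hk
      have hts : t <+: s k := (prefixF_prefix hpre hrx hrlen).trans hrs
      simp [ffun, fbr, hts, hpre]
    · filter_upwards [hmeet t.length] with k hk
      obtain ⟨r, hrlen, hrx, hrs⟩ := hk
      have hts : ¬ (t <+: s k) := fun hts =>
        hpre (prefixF_mono (List.prefix_of_prefix_length_le hts hrs hrlen) hrx)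
      simp [ffun, fbr, hts, hpre]
  · rw [nhds_discrete, Filter.tendsto_pure]
    by_cases hyx : y = x
    · subst hyx
      apply Filter.Eventually.of_forall
      intro k
      have hiff : (∃ p ∈ (Q : Set (Fin m × Fin m)), IncFB y (s k) p) ↔
          (i, j) ∈ (Q : Set (Fin m × Fin m)) := by
        constructor
        · rintro ⟨p, hpQ, hpinc⟩
          rwa [incFB_unique hpinc (hinc k)] at hpQ
        · intro h; exact ⟨(i, j), h, hinc k⟩
      have hiff2 : (i, j) ∈ (Q : Set (Fin m × Fin m)) ↔ Q = (⟨P, hP⟩ : ↥PP) := by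
        constructor
        · intro h
          apply Subtype.ext
          exact ((hpart.2 (i, j)).unique ⟨Q.2, h⟩ ⟨hP, hij⟩ : (Q : Set (Fin m × Fin m)) = P)
        · rintro rfl; exact hij
      show (if ∃ p ∈ (Q : Set (Fin m × Fin m)), IncFB y (s k) p then true else false) =
        (if (y = y ∧ Q = (⟨P, hP⟩ : ↥PP)) ∨
            (y ≠ y ∧ ∃ p ∈ (Q : Set (Fin m × Fin m)), IncBB y y p) then true else false)
      by_cases hQP : Q = (⟨P, hP⟩ : ↥PP)
      · rw [if_pos (hiff.mpr (hiff2.mpr hQP)), if_pos (Or.inl ⟨rfl, hQP⟩)]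
      · rw [if_neg (fun h => hQP (hiff2.mp (hiff.mp h))),
          if_neg (by rintro (⟨-, h⟩ | ⟨h, -⟩); exacts [hQP h, h rfl])]
    · have hne : ∃ n, y n ≠ x n := Function.ne_iff.mp hyx
      set k0 := Nat.find hne with hk0
      have hagree : ∀ l < k0, y l = x l := fun l hl => not_not.mp (Nat.find_min hne hl)
      have hdiff : y k0 ≠ x k0 := Nat.find_spec hne
      have hBB : IncBB y x (y k0, x k0) := ⟨k0, hagree, hdiff, rfl⟩
      have hRHS : ((y = x ∧ Q = (⟨P, hP⟩ : ↥PP)) ∨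
          (y ≠ x ∧ ∃ p ∈ (Q : Set (Fin m × Fin m)), IncBB y x p)) ↔
          (y k0, x k0) ∈ (Q : Set (Fin m × Fin m)) := by
        constructor
        · rintro (⟨h, -⟩ | ⟨-, p, hpQ, hp⟩)
          · exact absurd h hyx
          · rwa [incBB_unique hp hBB] at hpQ
        · intro h; exact Or.inr ⟨hyx, (y k0, x k0), h, hBB⟩
      filter_upwards [hmeet (k0 + 1)] with k hk
      obtain ⟨r, hrlen, hrx, hrs⟩ := hk
      set r0 : List (Fin m) := List.ofFn (fun i : Fin k0 => x i) with hr0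
      have hr0len : r0.length = k0 := by simp [hr0]
      have hr0y : PrefixF (r0 ++ [y k0]) y :=
        prefixF_concat_intro (prefixF_ofFn (fun l hl => (hagree l hl).symm))
          (by rw [hr0len])
      have hr0x : PrefixF (r0 ++ [x k0]) x :=
        prefixF_concat_intro (prefixF_ofFn (fun l _ => rfl)) (by rw [hr0len])
      have hr0s : (r0 ++ [x k0]) <+: s k :=
        (prefixF_prefix hr0x hrx (by simp [hr0len]; omega)).trans hrs
      have hFB : IncFB y (s k) (y k0, x k0) :=
        Or.inr ⟨hdiff, r0, hr0y, hr0s⟩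
      have hLHS : (∃ p ∈ (Q : Set (Fin m × Fin m)), IncFB y (s k) p) ↔
          (y k0, x k0) ∈ (Q : Set (Fin m × Fin m)) := by
        constructor
        · rintro ⟨p, hpQ, hp⟩
          rwa [incFB_unique hp hFB] at hpQ
        · intro h; exact ⟨(y k0, x k0), h, hFB⟩
      show (if ∃ p ∈ (Q : Set (Fin m × Fin m)), IncFB y (s k) p then true else false) =
        (if (y = x ∧ Q = (⟨P, hP⟩ : ↥PP)) ∨
            (y ≠ x ∧ ∃ p ∈ (Q : Set (Fin m × Fin m)), IncBB y x p) then true else false)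
      by_cases hQ : (y k0, x k0) ∈ (Q : Set (Fin m × Fin m))
      · rw [if_pos (hLHS.mpr hQ), if_pos (hRHS.mpr hQ)]
      · rw [if_neg (fun h => hQ (hLHS.mp h)), if_neg (fun h => hQ (hRHS.mp h))]
end

section
/- K_1(𝔓) contains a homeomorphic copy of the Cantor set whenever there exist i ≠ j in m such that (i,j) and (j,i) belong to the same piece P of the partition 𝔓; indeed the subspace {f_{(z,P)} : z ∈ {i,j}^ω} is homeomorphic to the Cantor set. -/
open Filter Topology

/-! `f_{(z,P)}`, for `z ∈ {i,j}^ω`, is the pointwise limit of the `f_s` along the nodes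
`s = (z ↾ n)⌢c`, where `c` is the letter of `{i,j}` other than `z n`: the incidence of `z` with
such an `s` is `(z n, c) ∈ P`, and every other branch eventually has the same incidence with `s`
as with `z`. The map `b ↦ f_{(z_b,P)}` on `2^ω` is injective, since the values on nodes recover
`z_b`, and continuous: a coordinate at a node, or at a branch leaving `{i,j}`, depends on finitely
many bits, while at a branch inside `{i,j}^ω` all incidences are `(i,j)` or `(j,i)`, so the
coordinate is constant. A continuous injection of a compact space into a Hausdorff space is an
embedding. -/

section Branches

variable {m : ℕ}

def initSeg {α : Type*} (z : ℕ → α) (n : ℕ) : List α := List.ofFn fun k : Fin n => z k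

@[simp] lemma initSeg_length {α : Type*} (z : ℕ → α) (n : ℕ) : (initSeg z n).length = n :=
  List.length_ofFn

@[simp] lemma initSeg_getElem {α : Type*} (z : ℕ → α) {n k : ℕ}
    (h : k < (initSeg z n).length) : (initSeg z n)[k] = z k := by
  simp [initSeg]

lemma initSeg_succ {α : Type*} (z : ℕ → α) (n : ℕ) :
    initSeg z (n + 1) = initSeg z n ++ [z n] := by
  rw [initSeg, List.ofFn_succ', List.concat_eq_append]
  rfl

lemma prefixF_iff {t : List (Fin m)} {z : ℕ → Fin m} :
    PrefixF t z ↔ ∀ k (h : k < t.length), t[k] = z k := by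
  simp [PrefixF, List.get_eq_getElem]

lemma prefixF_initSeg (z : ℕ → Fin m) (n : ℕ) : PrefixF (initSeg z n) z :=
  prefixF_iff.mpr fun _ _ => initSeg_getElem _ _

lemma prefixF_congr {t : List (Fin m)} {z z' : ℕ → Fin m}
    (h : ∀ k < t.length, z k = z' k) : PrefixF t z ↔ PrefixF t z' := by
  simp only [prefixF_iff]
  exact forall₂_congr fun k hk => by rw [h k hk]

lemma prefixF_append_singleton {r : List (Fin m)} {c : Fin m} {z : ℕ → Fin m} :
    PrefixF (r ++ [c]) z ↔ PrefixF r z ∧ c = z r.length := by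
  simp only [prefixF_iff, List.length_append, List.length_singleton]
  constructor
  · intro h
    refine ⟨fun k hk => ?_, ?_⟩
    · simpa [List.getElem_append_left hk] using h k (by omega)
    · simpa using h r.length (by omega)
  · rintro ⟨h, rfl⟩ k hk
    rcases Nat.lt_or_ge k r.length with hlt | hge
    · simpa [List.getElem_append_left hlt] using h k hlt
    · obtain rfl : k = r.length := by omega
      simp

lemma prefix_initSeg_iff {t : List (Fin m)} {z : ℕ → Fin m} {n : ℕ} :
    t <+: initSeg z n ↔ t.length ≤ n ∧ PrefixF t z := by
  constructor
  · intro h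
    refine ⟨by simpa using h.length_le, prefixF_iff.mpr fun k hk => ?_⟩
    rw [h.getElem hk, initSeg_getElem]
  · rintro ⟨hlen, hpre⟩
    rw [List.prefix_iff_eq_take]
    refine List.ext_getElem (by simp [hlen]) fun k h1 _ => ?_
    rw [List.getElem_take, initSeg_getElem]
    exact prefixF_iff.mp hpre k h1

lemma incBB_iff {y z : ℕ → Fin m} {k : ℕ} (hlt : ∀ l < k, y l = z l) (hk : y k ≠ z k)
    {p : Fin m × Fin m} : IncBB y z p ↔ p = (y k, z k) := by
  constructor
  · rintro ⟨k', hlt', hk', rfl⟩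
    obtain rfl : k' = k := by
      rcases lt_trichotomy k' k with h | h | h
      · exact absurd (hlt _ h) hk'
      · exact h
      · exact absurd (hlt' _ h) hk
    rfl
  · rintro rfl
    exact ⟨k, hlt, hk, rfl⟩

lemma exists_first_ne {y z : ℕ → Fin m} (h : y ≠ z) :
    ∃ k, (∀ l < k, y l = z l) ∧ y k ≠ z k := by
  classical
  have hd : ∃ k, y k ≠ z k := Function.ne_iff.mp h
  exact ⟨Nat.find hd, fun l hl => not_not.mp (Nat.find_min hd hl), Nat.find_spec hd⟩

lemma IncBB.exists_lt {y z : ℕ → Fin m} {p : Fin m × Fin m} (h : IncBB y z p) {N : ℕ}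
    (hy : ∃ k < N, y k ≠ z k) :
    ∃ k < N, (∀ l < k, y l = z l) ∧ y k ≠ z k ∧ p = (y k, z k) := by
  obtain ⟨k₀, hlt, hk₀, rfl⟩ := h
  obtain ⟨k, hkN, hk⟩ := hy
  exact ⟨k₀, lt_of_le_of_lt (not_lt.mp fun h => hk (hlt k h)) hkN, hlt, hk₀, rfl⟩

lemma incBB_congr {y z z' : ℕ → Fin m} {N : ℕ} (hzz' : ∀ l < N, z l = z' l)
    (hy : ∃ k < N, y k ≠ z k) {p : Fin m × Fin m} : IncBB y z p ↔ IncBB y z' p := by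
  have transfer : ∀ {z z' : ℕ → Fin m}, (∀ l < N, z l = z' l) →
      (∃ k < N, y k ≠ z k) → IncBB y z p → IncBB y z' p := by
    intro z z' hzz' hy h
    obtain ⟨k, hkN, hlt, hk, rfl⟩ := h.exists_lt hy
    rw [hzz' k hkN]
    refine ⟨k, fun l hl => (hlt l hl).trans (hzz' l (hl.trans hkN)), ?_, rfl⟩
    rwa [← hzz' k hkN]
  refine ⟨transfer hzz' hy, transfer (fun l hl => (hzz' l hl).symm) ?_⟩
  obtain ⟨k, hkN, hk⟩ := hy
  exact ⟨k, hkN, hzz' k hkN ▸ hk⟩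

lemma incFB_initSeg_iff {y w : ℕ → Fin m} {N : ℕ} (hy : ∃ k < N, y k ≠ w k)
    {p : Fin m × Fin m} : IncFB y (initSeg w N) p ↔ IncBB y w p := by
  constructor
  · rintro (⟨-, hpre⟩ | ⟨hp, r, hry, hrw⟩)
    · obtain ⟨k, hkN, hk⟩ := hy
      have := prefixF_iff.mp (prefixF_append_singleton.mp hpre).1 k (by simpa using hkN)
      exact absurd (by simpa using this.symm) hk
    · obtain ⟨hr, hp₁⟩ := prefixF_append_singleton.mp hry
      obtain ⟨hr', hp₂⟩ := prefixF_append_singleton.mp (prefix_initSeg_iff.mp hrw).2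
      refine ⟨r.length, fun l hl => ?_, hp₁ ▸ hp₂ ▸ hp, by rw [← hp₁, ← hp₂]⟩
      rw [← prefixF_iff.mp hr l hl, prefixF_iff.mp hr' l hl]
  · intro h
    obtain ⟨k, hkN, hlt, hk, rfl⟩ := h.exists_lt hy
    refine Or.inr ⟨hk, initSeg w k, prefixF_append_singleton.mpr ⟨?_, by simp⟩, ?_⟩
    · exact (prefixF_congr fun l hl => (hlt l (by simpa using hl)).symm).mp
        (prefixF_initSeg w k)
    · rw [← initSeg_succ]
      exact prefix_initSeg_iff.mpr ⟨by simpa using hkN, prefixF_initSeg w _⟩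

end Branches

section Evaluation

variable {m : ℕ} {PP : Set (Set (Fin m × Fin m))}

open Classical in
lemma ffun_apply_inl (s t : List (Fin m)) : ffun m PP s (.inl t) = decide (t <+: s) := rfl

open Classical in
lemma ffun_apply_inr (s : List (Fin m)) (y : ℕ → Fin m) (Q : PP) :
    ffun m PP s (.inr (y, Q)) = decide (∃ p ∈ (Q : Set (Fin m × Fin m)), IncFB y s p) := by
  simp [ffun]

open Classical in
lemma fbr_apply_inl (z : ℕ → Fin m) (P : PP) (t : List (Fin m)) :
    fbr m PP z P (.inl t) = decide (PrefixF t z) := by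
  simp [fbr]

open Classical in
lemma fbr_apply_inr_self (z : ℕ → Fin m) (P Q : PP) :
    fbr m PP z P (.inr (z, Q)) = decide ((Q : Set (Fin m × Fin m)) = P) := by
  simp [fbr, Subtype.ext_iff]

open Classical in
lemma fbr_apply_inr_of_ne {y z : ℕ → Fin m} (h : y ≠ z) (P Q : PP) :
    fbr m PP z P (.inr (y, Q)) = decide (∃ p ∈ (Q : Set (Fin m × Fin m)), IncBB y z p) := by
  simp [fbr, h]

end Evaluation

theorem fbr_mem_K1 {m : ℕ} {PP : Set (Set (Fin m × Fin m))} (hpart : Setoid.IsPartition PP)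
    {P : Set (Fin m × Fin m)} (hP : P ∈ PP) {z : ℕ → Fin m}
    (hz : ∀ n, ∃ c ≠ z n, (z n, c) ∈ P) : fbr m PP z ⟨P, hP⟩ ∈ K1 m PP := by
  choose c hcz hcP using hz
  set w : ℕ → ℕ → Fin m := fun n => Function.update z n (c n)
  have hw : ∀ n, ∀ l < n, z l = w n l := fun n l hl => (Function.update_of_ne hl.ne _ _).symm
  refine mem_closure_of_tendsto (b := atTop)
    (f := fun n => ffun m PP (initSeg (w n) (n + 1))) ?_
    (Eventually.of_forall fun n => Set.mem_range_self _)
  rw [tendsto_pi_nhds]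
  rintro (t | ⟨y, Q⟩) <;> refine tendsto_nhds_of_eventually_eq ?_
  · filter_upwards [eventually_ge_atTop t.length] with n hn
    rw [ffun_apply_inl, fbr_apply_inl, decide_eq_decide, prefix_initSeg_iff,
      prefixF_congr fun l hl => hw n l (by omega)]
    exact and_iff_right (by omega)
  · rcases eq_or_ne y z with rfl | hy
    · filter_upwards with n
      have hinc : ∀ p, IncFB y (initSeg (w n) (n + 1)) p ↔ p = (y n, c n) := fun p => by
        have hne : y n ≠ w n n := by simpa [w] using (hcz n).symm
        rw [incFB_initSeg_iff ⟨n, n.lt_succ_self, hne⟩, incBB_iff (hw n) hne]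
        simp [w]
      rw [ffun_apply_inr, fbr_apply_inr_self, decide_eq_decide]
      simp only [hinc, exists_eq_right]
      exact ⟨fun h => hpart.pairwiseDisjoint.elim_set Q.2 hP _ h (hcP n), fun h => h ▸ hcP n⟩
    · obtain ⟨k, -, hk⟩ := exists_first_ne hy
      filter_upwards [eventually_gt_atTop k] with n hn
      rw [ffun_apply_inr, fbr_apply_inr_of_ne hy, decide_eq_decide]
      refine exists_congr fun p => and_congr_right fun _ => ?_
      rw [incFB_initSeg_iff ⟨k, by omega, hw n k hn ▸ hk⟩, incBB_congr (hw n) ⟨k, hn, hk⟩]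

theorem DependsOn.continuous_of_finite {ι β : Type*} {α : ι → Type*}
    [∀ i, TopologicalSpace (α i)] [∀ i, DiscreteTopology (α i)] [TopologicalSpace β]
    {f : (Π i, α i) → β} {s : Set ι} (hf : DependsOn f s) (hs : s.Finite) : Continuous f :=
  IsLocallyConstant.continuous <| (IsLocallyConstant.iff_exists_open f).2 fun x =>
    ⟨s.pi fun i => {x i}, isOpen_set_pi hs fun _ _ => isOpen_discrete _, by simp,
      fun _ hy => hf fun i hi => hy i hi⟩

section CantorBranch

variable {α : Type*}

def cantorBranch (i j : α) (b : ℕ → Bool) : ℕ → α := fun n => if b n then i else j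

lemma cantorBranch_apply_eq_or (i j : α) (b : ℕ → Bool) (n : ℕ) :
    cantorBranch i j b n = i ∨ cantorBranch i j b n = j := by
  unfold cantorBranch
  split <;> simp

lemma cantorBranch_injective {i j : α} (hij : i ≠ j) :
    Function.Injective (cantorBranch i j) := by
  intro b b' h
  funext n
  have hn := congrFun h n
  cases hb : b n <;> cases hb' : b' n <;> simp only [cantorBranch, hb, hb'] at hn ⊢
  exacts [absurd hn.symm hij, absurd hn hij]

lemma range_cantorBranch (i j : α) :
    Set.range (cantorBranch i j) = {z | ∀ n, z n = i ∨ z n = j} := by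
  classical
  ext z
  constructor
  · rintro ⟨b, rfl⟩
    exact cantorBranch_apply_eq_or i j b
  · intro hz
    refine ⟨fun n => decide (z n = i), funext fun n => ?_⟩
    rcases hz n with h | h <;> by_cases hi : z n = i <;> simp_all [cantorBranch]

lemma cantorBranch_congr (i j : α) {b b' : ℕ → Bool} {N : ℕ} (h : ∀ l < N, b l = b' l) :
    ∀ l < N, cantorBranch i j b l = cantorBranch i j b' l := fun l hl => by
  simp [cantorBranch, h l hl]

end CantorBranch

section Embedding

variable {m : ℕ} {PP : Set (Set (Fin m × Fin m))}

lemma fbr_injective (P : PP) : Function.Injective fun z => fbr m PP z P := by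
  classical
  intro z z' h
  funext n
  have hpre := congrFun h (.inl (initSeg z (n + 1)))
  simp only [fbr_apply_inl, prefixF_initSeg, decide_true] at hpre
  simpa using prefixF_iff.mp (of_decide_eq_true hpre.symm) n (by simp)

lemma fbr_apply_inr_eq_of_forall_ne_mem (hpart : Setoid.IsPartition PP)
    {P : Set (Fin m × Fin m)} (hP : P ∈ PP) {y z : ℕ → Fin m}
    (hyz : ∀ n, y n ≠ z n → (y n, z n) ∈ P) (Q : PP) :
    fbr m PP z ⟨P, hP⟩ (.inr (y, Q)) = decide ((Q : Set (Fin m × Fin m)) = P) := by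
  rcases eq_or_ne y z with rfl | hne
  · exact fbr_apply_inr_self _ _ _
  · obtain ⟨k, hlt, hk⟩ := exists_first_ne hne
    rw [fbr_apply_inr_of_ne hne, decide_eq_decide]
    simp only [incBB_iff hlt hk, exists_eq_right]
    exact ⟨fun h => hpart.pairwiseDisjoint.elim_set Q.2 hP _ h (hyz k hk),
      fun h => h ▸ hyz k hk⟩

theorem continuous_fbr_cantorBranch (hpart : Setoid.IsPartition PP) {i j : Fin m}
    {P : Set (Fin m × Fin m)} (hP : P ∈ PP) (h1 : (i, j) ∈ P) (h2 : (j, i) ∈ P) :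
    Continuous fun b => fbr m PP (cantorBranch i j b) ⟨P, hP⟩ := by
  refine continuous_pi ?_
  rintro (t | ⟨y, Q⟩)
  · refine DependsOn.continuous_of_finite (s := Set.Iio t.length) (fun b b' h => ?_)
      (Set.finite_Iio _)
    simp only [fbr_apply_inl, decide_eq_decide]
    exact prefixF_congr (cantorBranch_congr i j h)
  · by_cases hy : ∀ n, y n = i ∨ y n = j
    · have hconst : ∀ b, fbr m PP (cantorBranch i j b) ⟨P, hP⟩ (.inr (y, Q)) =
          decide ((Q : Set (Fin m × Fin m)) = P) := fun b => by
        refine fbr_apply_inr_eq_of_forall_ne_mem hpart hP (fun n hn => ?_) Q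
        rcases hy n with h | h <;> rcases cantorBranch_apply_eq_or i j b n with h' | h' <;>
          rw [h, h'] at hn ⊢ <;> first | assumption | exact absurd rfl hn
      simp only [hconst]
      exact continuous_const
    · simp only [not_forall, not_or] at hy
      obtain ⟨k, hki, hkj⟩ := hy
      have hyk : ∀ b, y k ≠ cantorBranch i j b k := fun b =>
        (cantorBranch_apply_eq_or i j b k).elim (fun h => h.symm ▸ hki) (fun h => h.symm ▸ hkj)
      refine DependsOn.continuous_of_finite (s := Set.Iio (k + 1)) (fun b b' h => ?_)
        (Set.finite_Iio _)
      rw [fbr_apply_inr_of_ne (ne_of_apply_ne (· k) (hyk b)),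
        fbr_apply_inr_of_ne (ne_of_apply_ne (· k) (hyk b')), decide_eq_decide]
      exact exists_congr fun p => and_congr_right fun _ =>
        incBB_congr (cantorBranch_congr i j h) ⟨k, k.lt_succ_self, hyk b⟩

end Embedding

/-- If `(i,j)` and `(j,i)` (with `i ≠ j`) belong to the same piece `P` of the partition
`𝔓` of `m × m`, then the subspace `{f_{(z,P)} : z ∈ {i,j}^ω}` of `K_1(𝔓)` is
homeomorphic to the Cantor set `2^ω`; in particular `K_1(𝔓)` contains a homeomorphic
copy of the Cantor set. -/
theorem K1_contains_Cantor (m : ℕ) (PP : Set (Set (Fin m × Fin m)))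
    (hpart : Setoid.IsPartition PP) (i j : Fin m) (hij : i ≠ j)
    (P : Set (Fin m × Fin m)) (hP : P ∈ PP) (h1 : (i, j) ∈ P) (h2 : (j, i) ∈ P) :
    {f : XP m PP → Bool |
        ∃ z : ℕ → Fin m, (∀ n, z n = i ∨ z n = j) ∧ f = fbr m PP z ⟨P, hP⟩} ⊆ K1 m PP ∧
    Nonempty ((ℕ → Bool) ≃ₜ
      ↥{f : XP m PP → Bool |
          ∃ z : ℕ → Fin m, (∀ n, z n = i ∨ z n = j) ∧ f = fbr m PP z ⟨P, hP⟩}) := by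
  have hrange : Set.range (fun b => fbr m PP (cantorBranch i j b) ⟨P, hP⟩) =
      {f | ∃ z : ℕ → Fin m, (∀ n, z n = i ∨ z n = j) ∧ f = fbr m PP z ⟨P, hP⟩} := by
    rw [Set.range_comp' (fun z => fbr m PP z ⟨P, hP⟩) (cantorBranch i j), range_cantorBranch]
    ext f
    simp [eq_comm]
  refine ⟨?_, ?_⟩
  · rintro f ⟨z, hz, rfl⟩
    refine fbr_mem_K1 hpart hP fun n => ?_
    rcases hz n with h | h
    · exact ⟨j, h ▸ hij.symm, h ▸ h1⟩
    · exact ⟨i, h ▸ hij, h ▸ h2⟩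
  · have hemb := (continuous_fbr_cantorBranch hpart hP h1 h2).isClosedEmbedding
      ((fbr_injective _).comp (cantorBranch_injective hij))
    exact ⟨hemb.isEmbedding.toHomeomorph.trans (Homeomorph.setCongr hrange)⟩
end
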